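/- With the definitions below, suppose x = (x₁, x₂) ∈ Ω satisfies x₂ ≥ x₂*(x₁, κ) for some κ > β/μ₁ (so that μ₁x₂e^{−μ₁τ(x)} − β/√n ≥ (μ₁κ − β)/√n > 0). Then the function x ↦ τ(x) is differentiable at x, with partial derivatives τ₁(x) = −e^{−μ_Mτ(x)}·(μ₁x₂e^{−μ₁τ(x)} − β/√n)^{−1} ≤ 0 and τ₂(x) = (μ₁/(μ₁ − μ_M))·(e^{−μ₁τ(x)} − e^{−μ_Mτ(x)})·(μ₁x₂e^{−μ₁τ(x)} − β/√n)^{−1} ≤ 0, where τ₁(x) is understood as the left derivative in the first coordinate when x₁ = 0. -/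

import Mathlib

/-- The function `g_x(τ)` whose first nonnegative zero defines the hitting
time `τ(x)` of the fluid trajectory. -/
noncomputable def gfun (μ₁ μM β : ℝ) (n : ℕ) (x₁ x₂ τ : ℝ) : ℝ :=
  -β / (μM * Real.sqrt (n : ℝ)) +
    (x₁ + β / (μM * Real.sqrt (n : ℝ))) * Real.exp (-(μM * τ)) -
    μ₁ * x₂ / (μ₁ - μM) * (Real.exp (-(μ₁ * τ)) - Real.exp (-(μM * τ)))

/-- The set of nonnegative zeros of `g_x`. -/
def zeroSet (μ₁ μM β : ℝ) (n : ℕ) (x₁ x₂ : ℝ) : Set ℝ :=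
  {τ : ℝ | 0 ≤ τ ∧ gfun μ₁ μM β n x₁ x₂ τ = 0}

/-- The hitting time `τ(x)` as a function of `x ∈ Ω`. -/
noncomputable def tauFun (μ₁ μM β : ℝ) (n : ℕ) (x : ℝ × ℝ) : ℝ :=
  sInf (zeroSet μ₁ μM β n x.1 x.2)

/-- The asserted first partial derivative of `τ`:
`τ₁(x) = -e^{-μ_M τ(x)} (μ₁ x₂ e^{-μ₁ τ(x)} - β/√n)⁻¹`. -/
noncomputable def tauDeriv1 (μ₁ μM β : ℝ) (n : ℕ) (x : ℝ × ℝ) : ℝ :=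
  -(Real.exp (-(μM * tauFun μ₁ μM β n x)) *
      (μ₁ * x.2 * Real.exp (-(μ₁ * tauFun μ₁ μM β n x)) - β / Real.sqrt (n : ℝ))⁻¹)

/-- The asserted second partial derivative of `τ`:
`τ₂(x) = (μ₁/(μ₁-μ_M)) (e^{-μ₁ τ(x)} - e^{-μ_M τ(x)}) (μ₁ x₂ e^{-μ₁ τ(x)} - β/√n)⁻¹`. -/
noncomputable def tauDeriv2 (μ₁ μM β : ℝ) (n : ℕ) (x : ℝ × ℝ) : ℝ :=
  μ₁ / (μ₁ - μM) *
    (Real.exp (-(μ₁ * tauFun μ₁ μM β n x)) - Real.exp (-(μM * tauFun μ₁ μM β n x))) *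
    (μ₁ * x.2 * Real.exp (-(μ₁ * tauFun μ₁ μM β n x)) - β / Real.sqrt (n : ℝ))⁻¹

noncomputable def Ffun (μ₁ μM β : ℝ) (n : ℕ) (u t : ℝ) : ℝ :=
  β / (μM * Real.sqrt (n : ℝ)) * Real.exp (μM * t)
  + μ₁ / (μ₁ - μM) * u * Real.exp ((μM - μ₁) * t)
  - μ₁ / (μ₁ - μM) * u - β / (μM * Real.sqrt (n : ℝ))

noncomputable def Bval (μ₁ μM β : ℝ) (n : ℕ) (u t : ℝ) : ℝ :=
  β / Real.sqrt (n : ℝ) * Real.exp (μM * t) - μ₁ * u * Real.exp ((μM - μ₁) * t)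

noncomputable def Aval (μ₁ μM : ℝ) (t : ℝ) : ℝ :=
  μ₁ / (μ₁ - μM) * (Real.exp ((μM - μ₁) * t) - 1)

lemma gfun_eq (μ₁ μM β : ℝ) (n : ℕ) (hM : μM ≠ 0) (hne : μ₁ - μM ≠ 0)
    (hs : Real.sqrt (n : ℝ) ≠ 0) (x₁ x₂ t : ℝ) :
    gfun μ₁ μM β n x₁ x₂ t = Real.exp (-(μM * t)) * (x₁ - Ffun μ₁ μM β n x₂ t) := by
  have e1 : Real.exp ((μM - μ₁) * t) = Real.exp (μM * t) * Real.exp (-(μ₁ * t)) := by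
    rw [← Real.exp_add]; ring_nf
  have h3 : Real.exp (-(μM * t)) = (Real.exp (μM * t))⁻¹ := by rw [← Real.exp_neg]
  have hE : Real.exp (μM * t) ≠ 0 := (Real.exp_pos _).ne'
  unfold gfun Ffun
  rw [e1, h3]
  field_simp
  ring

lemma gfun_cont (μ₁ μM β : ℝ) (n : ℕ) (x₁ x₂ : ℝ) :
    Continuous (fun t => gfun μ₁ μM β n x₁ x₂ t) := by
  unfold gfun; fun_prop

lemma Ffun_cont (μ₁ μM β : ℝ) (n : ℕ) (u : ℝ) :
    Continuous (fun t => Ffun μ₁ μM β n u t) := by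
  unfold Ffun; fun_prop

lemma zeroSet_closed (μ₁ μM β : ℝ) (n : ℕ) (x₁ x₂ : ℝ) :
    IsClosed (zeroSet μ₁ μM β n x₁ x₂) := by
  have h : zeroSet μ₁ μM β n x₁ x₂ =
      Set.Ici (0:ℝ) ∩ {t | gfun μ₁ μM β n x₁ x₂ t = 0} := rfl
  rw [h]
  exact isClosed_Ici.inter (isClosed_eq (gfun_cont μ₁ μM β n x₁ x₂) continuous_const)

lemma zeroSet_bddBelow (μ₁ μM β : ℝ) (n : ℕ) (x₁ x₂ : ℝ) :
    BddBelow (zeroSet μ₁ μM β n x₁ x₂) := ⟨0, fun _ ht => ht.1⟩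

lemma gfun_zero (μ₁ μM β : ℝ) (n : ℕ) (x₁ x₂ : ℝ) :
    gfun μ₁ μM β n x₁ x₂ 0 = x₁ := by
  unfold gfun
  simp only [mul_zero, neg_zero, Real.exp_zero]
  ring

lemma hasDerivAt_Ffun (μ₁ μM β : ℝ) (n : ℕ) (hM : μM ≠ 0) (hne : μ₁ - μM ≠ 0)
    (hs : Real.sqrt (n : ℝ) ≠ 0)
    (u t : ℝ) : HasDerivAt (fun t => Ffun μ₁ μM β n u t) (Bval μ₁ μM β n u t) t := by
  have hA : HasDerivAt (fun t : ℝ => Real.exp (μM * t)) (Real.exp (μM * t) * μM) t := by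
    simpa using ((hasDerivAt_id t).const_mul μM).exp
  have hB : HasDerivAt (fun t : ℝ => Real.exp ((μM - μ₁) * t))
      (Real.exp ((μM - μ₁) * t) * (μM - μ₁)) t := by
    simpa using ((hasDerivAt_id t).const_mul (μM - μ₁)).exp
  have h := (((hA.const_mul (β / (μM * Real.sqrt (n:ℝ)))).add
      (hB.const_mul (μ₁ / (μ₁ - μM) * u))).sub_const (μ₁ / (μ₁ - μM) * u)).sub_const
      (β / (μM * Real.sqrt (n:ℝ)))
  refine h.congr_deriv ?_
  unfold Bval
  field_simp [hM, hne, hs]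
  ring

lemma hasStrictFDerivAt_F (μ₁ μM β : ℝ) (n : ℕ) (hM : μM ≠ 0) (hne : μ₁ - μM ≠ 0)
    (hs : Real.sqrt (n : ℝ) ≠ 0)
    (u t : ℝ) :
    HasStrictFDerivAt (fun p : ℝ × ℝ => Ffun μ₁ μM β n p.1 p.2)
      (Aval μ₁ μM t • ContinuousLinearMap.fst ℝ ℝ ℝ +
        Bval μ₁ μM β n u t • ContinuousLinearMap.snd ℝ ℝ ℝ) (u, t) := by
  have hsnd : HasStrictFDerivAt (fun p : ℝ × ℝ => μM * p.2)
      (μM • ContinuousLinearMap.snd ℝ ℝ ℝ) (u, t) :=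
    (μM • ContinuousLinearMap.snd ℝ ℝ ℝ).hasStrictFDerivAt
  have hsnd2 : HasStrictFDerivAt (fun p : ℝ × ℝ => (μM - μ₁) * p.2)
      ((μM - μ₁) • ContinuousLinearMap.snd ℝ ℝ ℝ) (u, t) :=
    ((μM - μ₁) • ContinuousLinearMap.snd ℝ ℝ ℝ).hasStrictFDerivAt
  have hfst : HasStrictFDerivAt (fun p : ℝ × ℝ => μ₁ / (μ₁ - μM) * p.1)
      ((μ₁ / (μ₁ - μM)) • ContinuousLinearMap.fst ℝ ℝ ℝ) (u, t) :=
    ((μ₁ / (μ₁ - μM)) • ContinuousLinearMap.fst ℝ ℝ ℝ).hasStrictFDerivAt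
  have hexp1 := hsnd.exp
  have hexp2 := hsnd2.exp
  have h := (((hexp1.const_mul (β / (μM * Real.sqrt (n:ℝ)))).add
      (hfst.mul hexp2)).sub hfst).sub_const (β / (μM * Real.sqrt (n:ℝ)))
  have heq : (β / (μM * Real.sqrt (n:ℝ))) •
        (Real.exp (μM * ((u, t) : ℝ × ℝ).2) • μM • ContinuousLinearMap.snd ℝ ℝ ℝ) +
        ((μ₁ / (μ₁ - μM) * ((u, t) : ℝ × ℝ).1) •
          (Real.exp ((μM - μ₁) * ((u, t) : ℝ × ℝ).2) • (μM - μ₁) • ContinuousLinearMap.snd ℝ ℝ ℝ) +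
          Real.exp ((μM - μ₁) * ((u, t) : ℝ × ℝ).2) • (μ₁ / (μ₁ - μM)) • ContinuousLinearMap.fst ℝ ℝ ℝ) -
        (μ₁ / (μ₁ - μM)) • ContinuousLinearMap.fst ℝ ℝ ℝ =
      Aval μ₁ μM t • ContinuousLinearMap.fst ℝ ℝ ℝ +
        Bval μ₁ μM β n u t • ContinuousLinearMap.snd ℝ ℝ ℝ := by
    apply ContinuousLinearMap.ext
    intro p
    simp only [ContinuousLinearMap.add_apply, ContinuousLinearMap.sub_apply,
      ContinuousLinearMap.smul_apply, ContinuousLinearMap.coe_fst',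
      ContinuousLinearMap.coe_snd', smul_eq_mul, Aval, Bval]
    field_simp [hM, hne, hs]
    ring
  rw [heq] at h
  exact h

set_option maxHeartbeats 2000000 in
/-- Part 3 of Lemma 8 of the paper: differentiability of `τ` above the curve
`Γ^κ` for `κ > β/μ₁`, with explicit nonpositive partial derivatives; on the
boundary `x₁ = 0`, differentiability within `Ω` corresponds to the left
derivative in the first coordinate. -/
theorem tau_differentiable
    (μ₁ μM β : ℝ) (h1 : μM < μ₁) (h2 : 0 < μM) (hβ : 0 < β)
    (n : ℕ) (hn : 0 < n) (κ : ℝ) (hκ : β / μ₁ < κ)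
    (x₁ x₂ : ℝ) (hx₁ : x₁ ≤ 0) (hx₂ : 0 ≤ x₂)
    -- `(x₂s, τs)` is the pair `(x₂*(x₁,κ), τ*(x₁,κ))` of Lemma 7:
    (x₂s τs : ℝ)
    (hs : κ / Real.sqrt (n : ℝ) ≤ x₂s) (hτs : 0 ≤ τs)
    (hg : gfun μ₁ μM β n x₁ x₂s τs = 0)
    (he : x₂s * Real.exp (-(μ₁ * τs)) = κ / Real.sqrt (n : ℝ))
    (hx : x₂s ≤ x₂) :
    0 < (μ₁ * κ - β) / Real.sqrt (n : ℝ) ∧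
    (μ₁ * κ - β) / Real.sqrt (n : ℝ) ≤
      μ₁ * x₂ * Real.exp (-(μ₁ * tauFun μ₁ μM β n (x₁, x₂))) - β / Real.sqrt (n : ℝ) ∧
    HasFDerivWithinAt (tauFun μ₁ μM β n)
      (tauDeriv1 μ₁ μM β n (x₁, x₂) • ContinuousLinearMap.fst ℝ ℝ ℝ +
        tauDeriv2 μ₁ μM β n (x₁, x₂) • ContinuousLinearMap.snd ℝ ℝ ℝ)
      (Set.Iic (0:ℝ) ×ˢ Set.Ici (0:ℝ)) (x₁, x₂) ∧
    tauDeriv1 μ₁ μM β n (x₁, x₂) ≤ 0 ∧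
    tauDeriv2 μ₁ μM β n (x₁, x₂) ≤ 0 := by
  have hμ₁ : 0 < μ₁ := h2.trans h1
  have hM : μM ≠ 0 := h2.ne'
  have hsub : 0 < μ₁ - μM := by linarith
  have hne : μ₁ - μM ≠ 0 := hsub.ne'
  have hspos : 0 < Real.sqrt (n:ℝ) := Real.sqrt_pos.mpr (by exact_mod_cast hn)
  have hsne : Real.sqrt (n:ℝ) ≠ 0 := hspos.ne'
  have hκβ : β < μ₁ * κ := by
    rw [div_lt_iff₀ hμ₁] at hκ; linarith
  have hfirst : 0 < (μ₁ * κ - β) / Real.sqrt (n:ℝ) := div_pos (by linarith) hspos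
  set t₀ := tauFun μ₁ μM β n (x₁, x₂) with ht₀def
  have hbdd := zeroSet_bddBelow μ₁ μM β n x₁ x₂
  have hcl := zeroSet_closed μ₁ μM β n x₁ x₂
  have hEle : Real.exp (-(μ₁ * τs)) ≤ Real.exp (-(μM * τs)) :=
    Real.exp_le_exp.mpr (by nlinarith)
  have hgτs : 0 ≤ gfun μ₁ μM β n x₁ x₂ τs := by
    have hdiff : gfun μ₁ μM β n x₁ x₂ τs - gfun μ₁ μM β n x₁ x₂s τs
        = μ₁ * (x₂ - x₂s) / (μ₁ - μM) *
          (Real.exp (-(μM * τs)) - Real.exp (-(μ₁ * τs))) := by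
      unfold gfun; ring
    have h0 : 0 ≤ μ₁ * (x₂ - x₂s) / (μ₁ - μM) *
        (Real.exp (-(μM * τs)) - Real.exp (-(μ₁ * τs))) :=
      mul_nonneg (div_nonneg (mul_nonneg hμ₁.le (by linarith)) hsub.le) (by linarith)
    linarith
  obtain ⟨t', ht'mem, hgt'⟩ : ∃ t ∈ Set.Icc (0:ℝ) τs, gfun μ₁ μM β n x₁ x₂ t = 0 := by
    have hc : ContinuousOn (fun t => gfun μ₁ μM β n x₁ x₂ t) (Set.Icc 0 τs) :=
      (gfun_cont μ₁ μM β n x₁ x₂).continuousOn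
    have h0mem : (0:ℝ) ∈ Set.Icc (gfun μ₁ μM β n x₁ x₂ 0) (gfun μ₁ μM β n x₁ x₂ τs) := by
      rw [gfun_zero]; exact ⟨hx₁, hgτs⟩
    obtain ⟨t, ht, hgt⟩ := intermediate_value_Icc hτs hc h0mem
    exact ⟨t, ht, hgt⟩
  have hnonempty : (zeroSet μ₁ μM β n x₁ x₂).Nonempty := ⟨t', ht'mem.1, hgt'⟩
  have ht₀mem : t₀ ∈ zeroSet μ₁ μM β n x₁ x₂ := hcl.csInf_mem hnonempty hbdd
  have ht₀0 : 0 ≤ t₀ := ht₀mem.1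
  have hgt₀ : gfun μ₁ μM β n x₁ x₂ t₀ = 0 := ht₀mem.2
  have ht₀le : t₀ ≤ τs := le_trans (csInf_le hbdd ⟨ht'mem.1, hgt'⟩) ht'mem.2
  have hκ0 : 0 < κ := lt_trans (div_pos hβ hμ₁) hκ
  have hκs : κ / Real.sqrt (n:ℝ) ≤ x₂ * Real.exp (-(μ₁ * t₀)) := by
    rw [← he]
    calc x₂s * Real.exp (-(μ₁ * τs)) ≤ x₂ * Real.exp (-(μ₁ * τs)) :=
          mul_le_mul_of_nonneg_right hx (Real.exp_pos _).le
      _ ≤ x₂ * Real.exp (-(μ₁ * t₀)) :=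
          mul_le_mul_of_nonneg_left (Real.exp_le_exp.mpr (by nlinarith)) hx₂
  have hsecond : (μ₁ * κ - β) / Real.sqrt (n:ℝ) ≤
      μ₁ * x₂ * Real.exp (-(μ₁ * t₀)) - β / Real.sqrt (n:ℝ) := by
    have h3 := mul_le_mul_of_nonneg_left hκs hμ₁.le
    rw [sub_div, mul_div_assoc]
    have h4 : μ₁ * (x₂ * Real.exp (-(μ₁ * t₀))) = μ₁ * x₂ * Real.exp (-(μ₁ * t₀)) := by ring
    linarith
  set Dv := μ₁ * x₂ * Real.exp (-(μ₁ * t₀)) - β / Real.sqrt (n:ℝ) with hDdef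
  have hDpos : 0 < Dv := lt_of_lt_of_le hfirst hsecond
  have hFx : Ffun μ₁ μM β n x₂ t₀ = x₁ := by
    have h5 := gfun_eq μ₁ μM β n hM hne hsne x₁ x₂ t₀
    rw [hgt₀] at h5
    have hE := (Real.exp_pos (-(μM * t₀))).ne'
    rcases mul_eq_zero.mp h5.symm with h | h
    · exact absurd h hE
    · linarith
  have hBD : Bval μ₁ μM β n x₂ t₀ = -(Real.exp (μM * t₀) * Dv) := by
    rw [hDdef]; unfold Bval
    have e1 : Real.exp ((μM - μ₁) * t₀) = Real.exp (μM * t₀) * Real.exp (-(μ₁ * t₀)) := by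
      rw [← Real.exp_add]; ring_nf
    rw [e1]; ring
  have hB0 : Bval μ₁ μM β n x₂ t₀ < 0 := by
    rw [hBD]
    have := mul_pos (Real.exp_pos (μM * t₀)) hDpos
    linarith
  have hBne : Bval μ₁ μM β n x₂ t₀ ≠ 0 := hB0.ne
  -- the continuous linear equivalence
  set L : (ℝ × ℝ) ≃L[ℝ] (ℝ × ℝ) := ContinuousLinearEquiv.equivOfInverse
    ((ContinuousLinearMap.fst ℝ ℝ ℝ).prod
      (Aval μ₁ μM t₀ • ContinuousLinearMap.fst ℝ ℝ ℝ +
        Bval μ₁ μM β n x₂ t₀ • ContinuousLinearMap.snd ℝ ℝ ℝ))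
    ((ContinuousLinearMap.fst ℝ ℝ ℝ).prod
      ((-(Aval μ₁ μM t₀ / Bval μ₁ μM β n x₂ t₀)) • ContinuousLinearMap.fst ℝ ℝ ℝ +
        (Bval μ₁ μM β n x₂ t₀)⁻¹ • ContinuousLinearMap.snd ℝ ℝ ℝ))
    (fun p => by
      refine Prod.ext ?_ ?_ <;>
        simp only [ContinuousLinearMap.prod_apply, ContinuousLinearMap.add_apply,
          ContinuousLinearMap.smul_apply, ContinuousLinearMap.coe_fst',
          ContinuousLinearMap.coe_snd', smul_eq_mul]
      field_simp
      ring)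
    (fun p => by
      refine Prod.ext ?_ ?_ <;>
        simp only [ContinuousLinearMap.prod_apply, ContinuousLinearMap.add_apply,
          ContinuousLinearMap.smul_apply, ContinuousLinearMap.coe_fst',
          ContinuousLinearMap.coe_snd', smul_eq_mul]
      field_simp
      ring)
    with hLdef
  have hcoeL : (L : (ℝ × ℝ) →L[ℝ] (ℝ × ℝ)) =
      (ContinuousLinearMap.fst ℝ ℝ ℝ).prod
        (Aval μ₁ μM t₀ • ContinuousLinearMap.fst ℝ ℝ ℝ +
          Bval μ₁ μM β n x₂ t₀ • ContinuousLinearMap.snd ℝ ℝ ℝ) := by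
    rfl
  have hΦ : HasStrictFDerivAt (fun p : ℝ × ℝ => (p.1, Ffun μ₁ μM β n p.1 p.2))
      (L : (ℝ × ℝ) →L[ℝ] (ℝ × ℝ)) (x₂, t₀) := by
    rw [hcoeL]
    exact HasStrictFDerivAt.prodMk hasStrictFDerivAt_fst (hasStrictFDerivAt_F μ₁ μM β n hM hne hsne x₂ t₀)
  set Ψ := hΦ.localInverse (fun p : ℝ × ℝ => (p.1, Ffun μ₁ μM β n p.1 p.2)) L (x₂, t₀)
    with hΨdef
  have hΨs : HasStrictFDerivAt Ψ ((L.symm : (ℝ × ℝ) →L[ℝ] (ℝ × ℝ))) ((x₂ : ℝ), x₁) := by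
    have h6 := hΦ.to_localInverse
    rwa [hFx] at h6
  have hΨc : ContinuousAt Ψ ((x₂ : ℝ), x₁) := by
    have h6 := hΦ.localInverse_continuousAt
    rwa [hFx] at h6
  have hΨr : ∀ᶠ q in nhds ((x₂ : ℝ), x₁),
      (fun p : ℝ × ℝ => (p.1, Ffun μ₁ μM β n p.1 p.2)) (Ψ q) = q := by
    have h6 := hΦ.eventually_right_inverse
    rwa [hFx] at h6
  have hΨim : Ψ ((x₂ : ℝ), x₁) = ((x₂ : ℝ), t₀) := by
    have h6 := hΦ.localInverse_apply_image
    rwa [hFx] at h6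
  set ψ := fun y : ℝ × ℝ => (Ψ (y.2, y.1)).2 with hψdef
  have hψx : ψ (x₁, x₂) = t₀ := by
    rw [hψdef]; simp only []; rw [hΨim]
  have hσ : HasFDerivAt (fun y : ℝ × ℝ => ((y.2, y.1) : ℝ × ℝ))
      ((ContinuousLinearMap.snd ℝ ℝ ℝ).prod (ContinuousLinearMap.fst ℝ ℝ ℝ)) (x₁, x₂) :=
    ((ContinuousLinearMap.snd ℝ ℝ ℝ).prod (ContinuousLinearMap.fst ℝ ℝ ℝ)).hasFDerivAt
  have hcomp : HasFDerivAt (fun y : ℝ × ℝ => Ψ (y.2, y.1))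
      ((L.symm : (ℝ × ℝ) →L[ℝ] (ℝ × ℝ)).comp
        ((ContinuousLinearMap.snd ℝ ℝ ℝ).prod (ContinuousLinearMap.fst ℝ ℝ ℝ))) (x₁, x₂) :=
    hΨs.hasFDerivAt.comp (x₁, x₂) hσ
  have hψd : HasFDerivAt ψ
      ((ContinuousLinearMap.snd ℝ ℝ ℝ).comp
        ((L.symm : (ℝ × ℝ) →L[ℝ] (ℝ × ℝ)).comp
          ((ContinuousLinearMap.snd ℝ ℝ ℝ).prod (ContinuousLinearMap.fst ℝ ℝ ℝ)))) (x₁, x₂) :=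
    (ContinuousLinearMap.snd ℝ ℝ ℝ).hasFDerivAt.comp (x₁, x₂) hcomp
  -- scalar identities
  have hτ1 : tauDeriv1 μ₁ μM β n (x₁, x₂) = (Bval μ₁ μM β n x₂ t₀)⁻¹ := by
    unfold tauDeriv1
    rw [← ht₀def, ← hDdef, hBD, inv_neg, mul_inv, Real.exp_neg]
  have hτ2 : tauDeriv2 μ₁ μM β n (x₁, x₂) =
      -(Aval μ₁ μM t₀ / Bval μ₁ μM β n x₂ t₀) := by
    unfold tauDeriv2
    rw [← ht₀def, ← hDdef, hBD]
    unfold Aval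
    have e1 : Real.exp ((μM - μ₁) * t₀) = Real.exp (μM * t₀) * Real.exp (-(μ₁ * t₀)) := by
      rw [← Real.exp_add]; ring_nf
    have e2 : Real.exp (-(μM * t₀)) = (Real.exp (μM * t₀))⁻¹ := by rw [← Real.exp_neg]
    rw [e1, e2]
    have hEne : Real.exp (μM * t₀) ≠ 0 := (Real.exp_pos _).ne'
    field_simp
  have hder : (ContinuousLinearMap.snd ℝ ℝ ℝ).comp
        ((L.symm : (ℝ × ℝ) →L[ℝ] (ℝ × ℝ)).comp
          ((ContinuousLinearMap.snd ℝ ℝ ℝ).prod (ContinuousLinearMap.fst ℝ ℝ ℝ))) =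
      tauDeriv1 μ₁ μM β n (x₁, x₂) • ContinuousLinearMap.fst ℝ ℝ ℝ +
        tauDeriv2 μ₁ μM β n (x₁, x₂) • ContinuousLinearMap.snd ℝ ℝ ℝ := by
    apply ContinuousLinearMap.ext
    intro p
    rw [hτ1, hτ2]
    have hw : (L : (ℝ × ℝ) →L[ℝ] (ℝ × ℝ)) (L.symm (p.2, p.1)) = (p.2, p.1) := by
      rw [ContinuousLinearEquiv.coe_coe]
      exact L.apply_symm_apply (p.2, p.1)
    rw [hcoeL] at hw
    simp only [ContinuousLinearMap.prod_apply, ContinuousLinearMap.add_apply,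
      ContinuousLinearMap.smul_apply, ContinuousLinearMap.coe_fst',
      ContinuousLinearMap.coe_snd', smul_eq_mul, Prod.mk.injEq] at hw
    obtain ⟨hw1, hw2⟩ := hw
    simp only [ContinuousLinearMap.comp_apply, ContinuousLinearMap.prod_apply,
      ContinuousLinearMap.add_apply, ContinuousLinearMap.smul_apply,
      ContinuousLinearMap.coe_fst', ContinuousLinearMap.coe_snd', smul_eq_mul,
      ContinuousLinearEquiv.coe_coe]
    rw [hw1] at hw2
    field_simp
    linarith
  -- region where the t-derivative of F is negative
  have hVopen : IsOpen {p : ℝ × ℝ | Bval μ₁ μM β n p.1 p.2 < 0} := by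
    apply isOpen_lt _ continuous_const
    unfold Bval; fun_prop
  have hVmem : ((x₂ : ℝ), t₀) ∈ {p : ℝ × ℝ | Bval μ₁ μM β n p.1 p.2 < 0} := hB0
  obtain ⟨r, hr0, hball⟩ := Metric.isOpen_iff.mp hVopen _ hVmem
  set ε := r / 2 with hεdef
  have hε0 : 0 < ε := by positivity
  have hanti : ∀ u : ℝ, dist u x₂ < r →
      StrictAntiOn (fun t => Ffun μ₁ μM β n u t) (Set.Icc (t₀ - ε) (t₀ + ε)) := by
    intro u hu
    apply strictAntiOn_of_deriv_neg (convex_Icc _ _) ((Ffun_cont μ₁ μM β n u).continuousOn)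
    intro t ht
    rw [interior_Icc] at ht
    rw [(hasDerivAt_Ffun μ₁ μM β n hM hne hsne u t).deriv]
    have hmemball : ((u, t) : ℝ × ℝ) ∈ Metric.ball (((x₂ : ℝ), t₀) : ℝ × ℝ) r := by
      rw [Metric.mem_ball, Prod.dist_eq]
      apply max_lt hu
      rw [Real.dist_eq, abs_lt]
      constructor <;> [linarith [ht.1]; linarith [ht.2]]
    have h9 : ((u, t) : ℝ × ℝ) ∈ {p : ℝ × ℝ | Bval μ₁ μM β n p.1 p.2 < 0} :=
      hball hmemball
    exact h9
  have hgneg : ∀ t, 0 ≤ t → t < t₀ → gfun μ₁ μM β n x₁ x₂ t < 0 := by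
    intro t ht0 htlt
    rcases lt_trichotomy (gfun μ₁ μM β n x₁ x₂ t) 0 with h | h | h
    · exact h
    · have h10 : t₀ ≤ t := csInf_le hbdd ⟨ht0, h⟩
      exact absurd h10 (not_le.mpr htlt)
    · exfalso
      obtain ⟨z, hz, hgz⟩ := intermediate_value_Icc ht0
        ((gfun_cont μ₁ μM β n x₁ x₂).continuousOn)
        (by rw [gfun_zero]; exact ⟨hx₁, h.le⟩)
      have h10 : t₀ ≤ z := csInf_le hbdd ⟨hz.1, hgz⟩
      linarith [hz.2]
  have hE4 : ∀ᶠ y : ℝ × ℝ in nhds (x₁, x₂),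
      ∀ t ∈ Set.Icc (0:ℝ) (t₀ - ε), gfun μ₁ μM β n y.1 y.2 t < 0 := by
    by_cases hc : t₀ - ε < 0
    · filter_upwards with y t ht
      exact absurd (ht.1.trans ht.2) (not_le.mpr hc)
    · push_neg at hc
      obtain ⟨z, hzmem, hzmax⟩ := (isCompact_Icc (a := (0:ℝ)) (b := t₀ - ε)).exists_isMaxOn
        ⟨0, le_refl 0, hc⟩ ((gfun_cont μ₁ μM β n x₁ x₂).continuousOn)
      have hm : 0 < -gfun μ₁ μM β n x₁ x₂ z := by
        have := hgneg z hzmem.1 (by linarith [hzmem.2, hε0])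
        linarith
      have hcontd : ContinuousAt
          (fun y : ℝ × ℝ => |y.1 - x₁| + μ₁ / (μ₁ - μM) * |y.2 - x₂|) (x₁, x₂) := by fun_prop
      have h0v : |((x₁, x₂) : ℝ × ℝ).1 - x₁| + μ₁ / (μ₁ - μM) * |((x₁, x₂) : ℝ × ℝ).2 - x₂|
          = 0 := by simp
      have htend : Filter.Tendsto
          (fun y : ℝ × ℝ => |y.1 - x₁| + μ₁ / (μ₁ - μM) * |y.2 - x₂|)
          (nhds (x₁, x₂)) (nhds 0) := by
        simpa using hcontd.tendsto
      have hev : ∀ᶠ y : ℝ × ℝ in nhds (x₁, x₂),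
          |y.1 - x₁| + μ₁ / (μ₁ - μM) * |y.2 - x₂| < -gfun μ₁ μM β n x₁ x₂ z :=
        htend.eventually_lt_const hm
      filter_upwards [hev] with y hy t htmem
      have hdiffy : gfun μ₁ μM β n y.1 y.2 t - gfun μ₁ μM β n x₁ x₂ t
          = (y.1 - x₁) * Real.exp (-(μM * t)) -
            μ₁ * (y.2 - x₂) / (μ₁ - μM) *
              (Real.exp (-(μ₁ * t)) - Real.exp (-(μM * t))) := by
        unfold gfun; ring
      have hexp1le : Real.exp (-(μM * t)) ≤ 1 := by
        rw [Real.exp_le_one_iff]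
        nlinarith [htmem.1]
      have hb1 : |(y.1 - x₁) * Real.exp (-(μM * t))| ≤ |y.1 - x₁| := by
        rw [abs_mul, abs_of_pos (Real.exp_pos _)]
        exact mul_le_of_le_one_right (abs_nonneg _) hexp1le
      have hb2 : |μ₁ * (y.2 - x₂) / (μ₁ - μM) *
          (Real.exp (-(μ₁ * t)) - Real.exp (-(μM * t)))| ≤ μ₁ / (μ₁ - μM) * |y.2 - x₂| := by
        rw [abs_mul]
        have hEmono : Real.exp (-(μ₁ * t)) ≤ Real.exp (-(μM * t)) := by
          apply Real.exp_le_exp.mpr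
          nlinarith [htmem.1]
        have hexp2le : Real.exp (-(μM * t)) ≤ 1 := hexp1le
        have hEd : |Real.exp (-(μ₁ * t)) - Real.exp (-(μM * t))| ≤ 1 := by
          rw [abs_of_nonpos (by linarith)]
          have := Real.exp_pos (-(μ₁ * t))
          linarith
        have habs1 : |μ₁ * (y.2 - x₂) / (μ₁ - μM)| = μ₁ / (μ₁ - μM) * |y.2 - x₂| := by
          rw [abs_div, abs_mul, abs_of_pos hμ₁, abs_of_pos hsub]
          ring
        calc |μ₁ * (y.2 - x₂) / (μ₁ - μM)| * |Real.exp (-(μ₁ * t)) - Real.exp (-(μM * t))|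
            ≤ |μ₁ * (y.2 - x₂) / (μ₁ - μM)| * 1 :=
              mul_le_mul_of_nonneg_left hEd (abs_nonneg _)
          _ = μ₁ / (μ₁ - μM) * |y.2 - x₂| := by rw [mul_one, habs1]
      have hgxz : gfun μ₁ μM β n x₁ x₂ t ≤ gfun μ₁ μM β n x₁ x₂ z := hzmax htmem
      have h5 : gfun μ₁ μM β n y.1 y.2 t ≤ gfun μ₁ μM β n x₁ x₂ t +
          (|y.1 - x₁| + μ₁ / (μ₁ - μM) * |y.2 - x₂|) := by
        have e1 := le_abs_self ((y.1 - x₁) * Real.exp (-(μM * t)))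
        have e2 := neg_abs_le (μ₁ * (y.2 - x₂) / (μ₁ - μM) *
          (Real.exp (-(μ₁ * t)) - Real.exp (-(μM * t))))
        linarith [hdiffy, hb1, hb2]
      linarith
  have hE1 : ∀ᶠ y : ℝ × ℝ in nhds (x₁, x₂), dist y.2 x₂ < r := by
    have hcd : ContinuousAt (fun y : ℝ × ℝ => dist y.2 x₂) (x₁, x₂) := by fun_prop
    have htend : Filter.Tendsto (fun y : ℝ × ℝ => dist y.2 x₂)
        (nhds (x₁, x₂)) (nhds 0) := by
      simpa using hcd.tendsto
    exact htend.eventually_lt_const hr0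
  have hψcont : ContinuousAt ψ (x₁, x₂) := by
    have hσc : ContinuousAt (fun y : ℝ × ℝ => ((y.2, y.1) : ℝ × ℝ)) (x₁, x₂) :=
      (continuous_snd.prodMk continuous_fst).continuousAt
    have h11 : ContinuousAt (fun y : ℝ × ℝ => Ψ (y.2, y.1)) (x₁, x₂) :=
      ContinuousAt.comp (f := fun y : ℝ × ℝ => ((y.2, y.1) : ℝ × ℝ)) hΨc hσc
    exact ContinuousAt.comp (f := fun y : ℝ × ℝ => Ψ (y.2, y.1))
      continuous_snd.continuousAt h11
  have hE2 : ∀ᶠ y : ℝ × ℝ in nhds (x₁, x₂), ψ y ∈ Set.Ioo (t₀ - ε) (t₀ + ε) := by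
    apply hψcont
    rw [hψx]
    exact Ioo_mem_nhds (by linarith) (by linarith)
  have hE3 : ∀ᶠ y : ℝ × ℝ in nhds (x₁, x₂),
      (fun p : ℝ × ℝ => (p.1, Ffun μ₁ μM β n p.1 p.2)) (Ψ (y.2, y.1)) = (y.2, y.1) := by
    have hσt : Filter.Tendsto (fun y : ℝ × ℝ => ((y.2, y.1) : ℝ × ℝ))
        (nhds (x₁, x₂)) (nhds ((x₂ : ℝ), x₁)) :=
      (continuous_snd.prodMk continuous_fst).continuousAt
    exact hσt.eventually hΨr
  have hfinal : ∀ᶠ y : ℝ × ℝ in nhdsWithin (x₁, x₂) (Set.Iic (0:ℝ) ×ˢ Set.Ici (0:ℝ)),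
      tauFun μ₁ μM β n y = ψ y := by
    have hall := (hE1.and (hE2.and (hE3.and hE4))).filter_mono
      (nhdsWithin_le_nhds (s := Set.Iic (0:ℝ) ×ˢ Set.Ici (0:ℝ)))
    have hmem := self_mem_nhdsWithin
      (a := ((x₁, x₂) : ℝ × ℝ)) (s := Set.Iic (0:ℝ) ×ˢ Set.Ici (0:ℝ))
    filter_upwards [hall, hmem] with y hy hyΩ
    obtain ⟨hy1, hy2, hy3, hy4⟩ := hy
    have hy₁0 : y.1 ≤ 0 := hyΩ.1
    rw [Prod.ext_iff] at hy3
    obtain ⟨hfsty, hsndy⟩ := hy3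
    simp only [] at hfsty hsndy
    have hFψ : Ffun μ₁ μM β n y.2 (ψ y) = y.1 := by
      have h11 := hsndy
      rw [hfsty] at h11
      exact h11
    have hanti' := hanti y.2 hy1
    have hlt : Ffun μ₁ μM β n y.2 (t₀ + ε) < y.1 := by
      rw [← hFψ]
      exact hanti' ⟨hy2.1.le, hy2.2.le⟩ ⟨by linarith, le_refl _⟩ hy2.2
    have hgpos : 0 < gfun μ₁ μM β n y.1 y.2 (t₀ + ε) := by
      rw [gfun_eq μ₁ μM β n hM hne hsne]
      exact mul_pos (Real.exp_pos _) (by linarith)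
    obtain ⟨t'', ht''1, ht''2⟩ : ∃ t ∈ Set.Icc (0:ℝ) (t₀ + ε),
        gfun μ₁ μM β n y.1 y.2 t = 0 := by
      obtain ⟨t, ht, hgt⟩ := intermediate_value_Icc (by linarith : (0:ℝ) ≤ t₀ + ε)
        ((gfun_cont μ₁ μM β n y.1 y.2).continuousOn)
        (by rw [gfun_zero]; exact ⟨hy₁0, hgpos.le⟩)
      exact ⟨t, ht, hgt⟩
    have hNE : (zeroSet μ₁ μM β n y.1 y.2).Nonempty := ⟨t'', ht''1.1, ht''2⟩
    have hBB := zeroSet_bddBelow μ₁ μM β n y.1 y.2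
    have hτymem : tauFun μ₁ μM β n y ∈ zeroSet μ₁ μM β n y.1 y.2 :=
      (zeroSet_closed μ₁ μM β n y.1 y.2).csInf_mem hNE hBB
    have hτyle : tauFun μ₁ μM β n y ≤ t₀ + ε :=
      le_trans (csInf_le hBB ⟨ht''1.1, ht''2⟩) ht''1.2
    have hτyge : t₀ - ε ≤ tauFun μ₁ μM β n y := by
      by_contra hcon
      push_neg at hcon
      have := hy4 (tauFun μ₁ μM β n y) ⟨hτymem.1, hcon.le⟩
      rw [hτymem.2] at this
      exact absurd this (lt_irrefl 0)
    have hFτ : Ffun μ₁ μM β n y.2 (tauFun μ₁ μM β n y) = y.1 := by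
      have h7 := hτymem.2
      rw [gfun_eq μ₁ μM β n hM hne hsne] at h7
      have hE := (Real.exp_pos (-(μM * tauFun μ₁ μM β n y))).ne'
      rcases mul_eq_zero.mp h7 with h | h
      · exact absurd h hE
      · linarith
    exact hanti'.injOn ⟨hτyge, hτyle⟩ ⟨hy2.1.le, hy2.2.le⟩ (by rw [hFτ, hFψ])
  have heqpt : tauFun μ₁ μM β n (x₁, x₂) = ψ (x₁, x₂) := by rw [hψx]
  refine ⟨hfirst, hsecond, ?_, ?_, ?_⟩
  · rw [hder] at hψd
    exact hψd.hasFDerivWithinAt.congr_of_eventuallyEq hfinal heqpt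
  · rw [hτ1]
    exact inv_nonpos.mpr hB0.le
  · rw [hτ2]
    have hA0 : Aval μ₁ μM t₀ ≤ 0 := by
      unfold Aval
      have : Real.exp ((μM - μ₁) * t₀) ≤ 1 := by
        rw [Real.exp_le_one_iff]
        nlinarith
      have hap : 0 < μ₁ / (μ₁ - μM) := div_pos hμ₁ hsub
      nlinarith
    have hinv : (Bval μ₁ μM β n x₂ t₀)⁻¹ ≤ 0 := inv_nonpos.mpr hB0.le
    rw [div_eq_mul_inv]
    nlinarith
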